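/- arXiv:2601.11271 — 6 statements merged into one kernel-verified Lean document; each statement's English description precedes it below -/
import Mathlib

section
/- Let N and M be nonnegative integers. If N ≥ M then P(N,M) = Σ_{i=0}^{M} ( min(⌊(N-i)/2⌋, M-i) + 1 ), and if M ≥ N then P(N,M) = Σ_{i=0}^{N} ( ⌊(N-i)/2⌋ + 1 ). -/
/-- `P N M` is the number of pairs `(x, y)` of nonnegative integers with
`x + 2y ≤ N` and `x + y ≤ M`. -/
noncomputable def P (N M : ℤ) : ℕ :=
  Set.ncard {q : ℕ × ℕ | (q.1 : ℤ) + 2 * q.2 ≤ N ∧ (q.1 : ℤ) + q.2 ≤ M}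

/-- If `N ≥ M` then `P(N,M) = Σ_{i=0}^{M} (min(⌊(N-i)/2⌋, M-i) + 1)`, and if `M ≥ N`
then `P(N,M) = Σ_{i=0}^{N} (⌊(N-i)/2⌋ + 1)`. -/
theorem P_formula (N M : ℕ) :
    (M ≤ N → (P N M : ℤ) =
      ∑ i ∈ Finset.range (M + 1), (min (((N : ℤ) - i) / 2) ((M : ℤ) - i) + 1)) ∧
    (N ≤ M → (P N M : ℤ) =
      ∑ i ∈ Finset.range (N + 1), (((N : ℤ) - i) / 2 + 1)) := by
  have hset : {q : ℕ × ℕ | (q.1 : ℤ) + 2 * q.2 ≤ (N : ℤ) ∧ (q.1 : ℤ) + q.2 ≤ (M : ℤ)} =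
      ↑((Finset.range (min N M + 1) ×ˢ Finset.range (M + 1)).filter
        fun q => (q.1 : ℤ) + 2 * q.2 ≤ (N : ℤ) ∧ (q.1 : ℤ) + q.2 ≤ (M : ℤ)) := by
    ext ⟨x, y⟩
    simp only [Set.mem_setOf_eq, Finset.coe_filter, Finset.mem_product, Finset.mem_range,
      Set.mem_setOf_eq]
    constructor
    · intro h
      refine ⟨⟨?_, ?_⟩, h⟩ <;> omega
    · exact fun h => h.2
  have hP : P N M = ∑ i ∈ Finset.range (min N M + 1),
      ((Finset.range (M + 1)).filter
        fun y : ℕ => (i : ℤ) + 2 * (y : ℤ) ≤ (N : ℤ) ∧ (i : ℤ) + (y : ℤ) ≤ (M : ℤ)).card := by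
    rw [P, hset, Set.ncard_coe_finset, Finset.card_filter, Finset.sum_product]
    refine Finset.sum_congr rfl fun i _ => ?_
    rw [Finset.card_filter]
  constructor <;> intro h
  · have hmin : min N M = M := by omega
    rw [hP, hmin]
    push_cast
    apply Finset.sum_congr rfl
    intro i hi
    rw [Finset.mem_range] at hi
    have hfil : (Finset.range (M + 1)).filter
        (fun y : ℕ => (i : ℤ) + 2 * (y : ℤ) ≤ (N : ℤ) ∧ (i : ℤ) + (y : ℤ) ≤ (M : ℤ))
        = Finset.range (min ((N - i) / 2) (M - i) + 1) := by
      ext y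
      simp only [Finset.mem_filter, Finset.mem_range]
      omega
    rw [hfil, Finset.card_range]
    omega
  · have hmin : min N M = N := by omega
    rw [hP, hmin]
    push_cast
    apply Finset.sum_congr rfl
    intro i hi
    rw [Finset.mem_range] at hi
    have hfil : (Finset.range (M + 1)).filter
        (fun y : ℕ => (i : ℤ) + 2 * (y : ℤ) ≤ (N : ℤ) ∧ (i : ℤ) + (y : ℤ) ≤ (M : ℤ))
        = Finset.range ((N - i) / 2 + 1) := by
      ext y
      simp only [Finset.mem_filter, Finset.mem_range]
      omega
    rw [hfil, Finset.card_range]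
    omega
end

section
/- Let p, a, b be integers with 0 ≤ b ≤ a and a+b+3 < p. Then P(p-2a-4, p-a-b-3) − P(p-2a-5, p-a-b-3) = P(p-2a-4, p-a-2) − P(p-2a-5, p-a-2); moreover both sides equal ⌊(p-2a-4)/2⌋ + 1 if p ≥ 2a+4, and both sides equal 0 if p < 2a+4. -/
lemma P_finite_aux (N M : ℤ) :
    {q : ℕ × ℕ | (q.1 : ℤ) + 2 * q.2 ≤ N ∧ (q.1 : ℤ) + q.2 ≤ M}.Finite := by
  apply Set.Finite.subset ((Set.finite_Iic N.toNat).prod (Set.finite_Iic N.toNat))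
  rintro ⟨x, y⟩ ⟨h1, h2⟩
  simp only [Set.mem_prod, Set.mem_Iic]
  omega

lemma P_neg (N M : ℤ) (h : N < 0) : P N M = 0 := by
  unfold P
  convert Set.ncard_empty (ℕ × ℕ)
  ext ⟨x, y⟩
  simp only [Set.mem_setOf_eq, Set.mem_empty_iff_false, iff_false, not_and]
  intro h1
  omega

lemma T_card (N : ℤ) (h : 0 ≤ N) :
    {q : ℕ × ℕ | (q.1 : ℤ) + 2 * q.2 = N}.ncard = N.toNat / 2 + 1 := by
  have hset : {q : ℕ × ℕ | (q.1 : ℤ) + 2 * q.2 = N} =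
      ↑((Finset.range (N.toNat / 2 + 1)).image fun y => (N.toNat - 2 * y, y)) := by
    ext ⟨x, y⟩
    simp only [Set.mem_setOf_eq, Finset.coe_image, Set.mem_image, Finset.mem_coe,
      Finset.mem_range, Prod.mk.injEq]
    constructor
    · intro hxy
      exact ⟨y, by omega, by omega, rfl⟩
    · rintro ⟨y', hy', h1, rfl⟩
      omega
  rw [hset, Set.ncard_coe_finset,
    Finset.card_image_of_injective _ (fun a b hab => by simpa using congrArg Prod.snd hab),
    Finset.card_range]

lemma P_step (N M : ℤ) (h0 : 0 ≤ N) (h : N ≤ M) :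
    P N M = P (N - 1) M + (N.toNat / 2 + 1) := by
  have hfin1 := P_finite_aux (N - 1) M
  have hfinT : {q : ℕ × ℕ | (q.1 : ℤ) + 2 * q.2 = N}.Finite := by
    apply Set.Finite.subset (P_finite_aux N M)
    rintro ⟨x, y⟩ hq
    simp only [Set.mem_setOf_eq] at hq ⊢
    omega
  have hunion : {q : ℕ × ℕ | (q.1 : ℤ) + 2 * q.2 ≤ N ∧ (q.1 : ℤ) + q.2 ≤ M} =
      {q : ℕ × ℕ | (q.1 : ℤ) + 2 * q.2 ≤ N - 1 ∧ (q.1 : ℤ) + q.2 ≤ M} ∪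
      {q : ℕ × ℕ | (q.1 : ℤ) + 2 * q.2 = N} := by
    ext ⟨x, y⟩
    simp only [Set.mem_setOf_eq, Set.mem_union]
    omega
  have hdisj : Disjoint
      {q : ℕ × ℕ | (q.1 : ℤ) + 2 * q.2 ≤ N - 1 ∧ (q.1 : ℤ) + q.2 ≤ M}
      {q : ℕ × ℕ | (q.1 : ℤ) + 2 * q.2 = N} := by
    rw [Set.disjoint_left]
    rintro ⟨x, y⟩ h1 h2
    simp only [Set.mem_setOf_eq] at h1 h2
    omega
  unfold P
  rw [hunion, Set.ncard_union_eq hdisj hfin1 hfinT, T_card N h0]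

/-- For `(a,b)` in the lowest alcove `C₀` of `sp₄`:
`P(p-2a-4, p-a-b-3) − P(p-2a-5, p-a-b-3) = P(p-2a-4, p-a-2) − P(p-2a-5, p-a-2)`;
moreover both sides equal `⌊(p-2a-4)/2⌋ + 1` if `p ≥ 2a+4`, and both equal `0`
if `p < 2a+4`. -/
theorem P_difference_lambda_primes (p a b : ℤ) (hb : 0 ≤ b) (hba : b ≤ a)
    (hp : a + b + 3 < p) :
    ((P (p - 2 * a - 4) (p - a - b - 3) : ℤ) - (P (p - 2 * a - 5) (p - a - b - 3) : ℤ) =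
      (P (p - 2 * a - 4) (p - a - 2) : ℤ) - (P (p - 2 * a - 5) (p - a - 2) : ℤ)) ∧
    (2 * a + 4 ≤ p →
      ((P (p - 2 * a - 4) (p - a - b - 3) : ℤ) - (P (p - 2 * a - 5) (p - a - b - 3) : ℤ) =
          (p - 2 * a - 4) / 2 + 1 ∧
        (P (p - 2 * a - 4) (p - a - 2) : ℤ) - (P (p - 2 * a - 5) (p - a - 2) : ℤ) =
          (p - 2 * a - 4) / 2 + 1)) ∧
    (p < 2 * a + 4 →
      ((P (p - 2 * a - 4) (p - a - b - 3) : ℤ) - (P (p - 2 * a - 5) (p - a - b - 3) : ℤ) = 0 ∧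
        (P (p - 2 * a - 4) (p - a - 2) : ℤ) - (P (p - 2 * a - 5) (p - a - 2) : ℤ) = 0)) := by
  set N : ℤ := p - 2 * a - 4 with hN
  by_cases hc : 2 * a + 4 ≤ p
  · have h0 : 0 ≤ N := by omega
    have hcast : ((N.toNat / 2 : ℕ) : ℤ) = N / 2 := by
      omega
    have h1 := P_step N (p - a - b - 3) h0 (by omega)
    have h2 := P_step N (p - a - 2) h0 (by omega)
    have hN5 : p - 2 * a - 5 = N - 1 := by omega
    rw [hN5, h1, h2]
    push_cast
    refine ⟨by ring, fun _ => ⟨by omega, by omega⟩, fun hlt => absurd hc (by omega)⟩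
  · have hneg : N < 0 := by omega
    have hneg' : p - 2 * a - 5 < 0 := by omega
    rw [P_neg N _ hneg, P_neg N _ hneg, P_neg _ _ hneg', P_neg _ _ hneg']
    simp
    omega
end

section
/- Let p, a, b be integers with 0 ≤ b ≤ a and a+b+3 < p, and for integers N, M write D(N,M) = P(N,M) − P(N-1,M). Then D(p+b-a-1, p-a-2) − D(p-2a-4, p-a-2) − D(p-a-b-3, p-a-b-3) + D(p-2a-4, p-a-b-3) = 0. -/
/-- `D N M = P(N,M) − P(N-1,M)`. -/
noncomputable def D (N M : ℤ) : ℤ := (P N M : ℤ) - (P (N - 1) M : ℤ)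

lemma P_empty {N M : ℤ} (h : N < 0) : P N M = 0 := by
  unfold P
  convert Set.ncard_empty (ℕ × ℕ)
  ext q
  simp only [Set.mem_setOf_eq, Set.mem_empty_iff_false, iff_false, not_and]
  intro h1
  omega

lemma D_neg {N M : ℤ} (h : N < 0) : D N M = 0 := by
  unfold D
  rw [P_empty h, P_empty (show N - 1 < 0 by omega)]
  ring

lemma P_fin {N M : ℤ} (hM : 0 ≤ M) :
    {q : ℕ × ℕ | (q.1 : ℤ) + 2 * q.2 ≤ N ∧ (q.1 : ℤ) + q.2 ≤ M}.Finite := by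
  apply Set.Finite.subset (Set.finite_Iic (M.toNat, M.toNat))
  rintro ⟨x, y⟩ ⟨h1, h2⟩
  simp only [Set.mem_Iic, Prod.mk_le_mk]
  omega

lemma D_formula {N M : ℤ} (h0 : 0 ≤ N) (h2 : N ≤ 2 * M) :
    D N M = N / 2 - max 0 (N - M) + 1 := by
  have hM : 0 ≤ M := by omega
  set S : Set (ℕ × ℕ) := {q : ℕ × ℕ | (q.1 : ℤ) + 2 * q.2 = N ∧ (q.1 : ℤ) + q.2 ≤ M} with hS
  have hunion : {q : ℕ × ℕ | (q.1 : ℤ) + 2 * q.2 ≤ N ∧ (q.1 : ℤ) + q.2 ≤ M} =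
      {q : ℕ × ℕ | (q.1 : ℤ) + 2 * q.2 ≤ N - 1 ∧ (q.1 : ℤ) + q.2 ≤ M} ∪ S := by
    ext q
    simp only [Set.mem_setOf_eq, Set.mem_union, hS]
    omega
  have hdisj : Disjoint {q : ℕ × ℕ | (q.1 : ℤ) + 2 * q.2 ≤ N - 1 ∧ (q.1 : ℤ) + q.2 ≤ M} S := by
    rw [Set.disjoint_left]
    rintro q ⟨h1, _⟩ ⟨h3, _⟩
    omega
  have hSfin : S.Finite := by
    apply Set.Finite.subset (P_fin (N := N) hM)
    rintro q ⟨h1, h2⟩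
    exact ⟨by omega, h2⟩
  have hcard : P N M = P (N - 1) M + S.ncard := by
    unfold P
    rw [hunion, Set.ncard_union_eq hdisj (P_fin hM) hSfin]
  -- compute ncard S
  have hSimg : S = (fun y : ℕ => ((N - 2 * y).toNat, y)) '' Set.Icc (N - M).toNat (N / 2).toNat := by
    ext ⟨x, y⟩
    simp only [hS, Set.mem_setOf_eq, Set.mem_image, Set.mem_Icc, Prod.mk.injEq]
    constructor
    · rintro ⟨h1, h2⟩
      exact ⟨y, ⟨by omega, by omega⟩, by omega, rfl⟩
    · rintro ⟨z, ⟨hz1, hz2⟩, hx, hy⟩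
      constructor <;> omega
  have hinj : Set.InjOn (fun y : ℕ => ((N - 2 * y).toNat, y))
      (Set.Icc (N - M).toNat (N / 2).toNat) := by
    intro y1 _ y2 _ h
    exact (Prod.mk.injEq _ _ _ _).mp h |>.2
  have hScard : S.ncard = (N / 2).toNat + 1 - (N - M).toNat := by
    rw [hSimg, Set.ncard_image_of_injOn hinj, ← Finset.coe_Icc, Set.ncard_coe_finset,
      Nat.card_Icc]
  unfold D
  rw [hcard, hScard]
  push_cast
  omega

/-- For `(a,b)` in the lowest alcove `C₀` of `sp₄`:
`D(p+b-a-1, p-a-2) − D(p-2a-4, p-a-2) − D(p-a-b-3, p-a-b-3) + D(p-2a-4, p-a-b-3) = 0`. -/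
theorem alternating_sum_vanishes (p a b : ℤ) (hb : 0 ≤ b) (hba : b ≤ a)
    (hp : a + b + 3 < p) :
    D (p + b - a - 1) (p - a - 2) - D (p - 2 * a - 4) (p - a - 2) -
        D (p - a - b - 3) (p - a - b - 3) + D (p - 2 * a - 4) (p - a - b - 3) = 0 := by
  have h1 := D_formula (N := p + b - a - 1) (M := p - a - 2) (by omega) (by omega)
  have h3 := D_formula (N := p - a - b - 3) (M := p - a - b - 3) (by omega) (by omega)
  rcases lt_or_ge (p - 2 * a - 4) 0 with h | h
  · rw [h1, h3, D_neg h, D_neg h]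
    omega
  · have h2 := D_formula (N := p - 2 * a - 4) (M := p - a - 2) h (by omega)
    have h4 := D_formula (N := p - 2 * a - 4) (M := p - a - b - 3) h (by omega)
    rw [h1, h2, h3, h4]
    omega
end

section
/- Let p be an integer and λ0 = (a,b) with 0 ≤ b ≤ a and a+b+3 < p, and let λ1 = (p-b-3, p-a-3). Let W be the group of linear automorphisms of ℤ² generated by s_α(x,y) = (y,x) and s_β(x,y) = (x,-y) (the Weyl group of C₂, of order 8), acting on weights by the dot action w·λ = w(λ+ρ) − ρ, and let W_aff·λ0 = { w·λ0 + pγ : w ∈ W, γ ∈ ℤα + ℤβ } be the dot orbit of λ0 under the p-dilated affine Weyl group. Then every weight χ ∈ W_aff·λ0 with χ ≠ λ0 that is dominant (i.e. ⟨χ,α∨⟩ ≥ 0 and ⟨χ,β∨⟩ ≥ 0) satisfies λ1 ≤ χ in the root order. -/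
/-- The short simple root `α = (1,-1)` of `C₂`. -/
def alphaR : ℤ × ℤ := (1, -1)
/-- The long simple root `β = (0,2)` of `C₂`. -/
def betaR : ℤ × ℤ := (0, 2)
/-- The half sum of positive roots `ρ = (2,1)`. -/
def rhoR : ℤ × ℤ := (2, 1)

/-- The root order: `λ ≤ μ` iff `μ − λ ∈ ℤ≥0·α + ℤ≥0·β`. -/
def rootLE (lam mu : ℤ × ℤ) : Prop :=
  ∃ m n : ℤ, 0 ≤ m ∧ 0 ≤ n ∧ mu - lam = m • alphaR + n • betaR

/-- The reflection `s_α (x,y) = (y,x)` as a linear automorphism of `ℤ²`. -/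
def sAlpha : (ℤ × ℤ) ≃ₗ[ℤ] ℤ × ℤ := LinearEquiv.prodComm ℤ ℤ ℤ

/-- The reflection `s_β (x,y) = (x,-y)` as a linear automorphism of `ℤ²`. -/
def sBeta : (ℤ × ℤ) ≃ₗ[ℤ] ℤ × ℤ := (LinearEquiv.refl ℤ ℤ).prodCongr (LinearEquiv.neg ℤ)

/-- signed-permutation predicate -/
def IsSignedPerm (w : (ℤ × ℤ) ≃ₗ[ℤ] ℤ × ℤ) : Prop :=
  ∃ s t : ℤ, (s = 1 ∨ s = -1) ∧ (t = 1 ∨ t = -1) ∧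
    ((∀ v : ℤ × ℤ, w v = (s * v.1, t * v.2)) ∨ (∀ v : ℤ × ℤ, w v = (s * v.2, t * v.1)))

lemma closure_isSignedPerm :
    ∀ w ∈ Subgroup.closure ({sAlpha, sBeta} : Set ((ℤ × ℤ) ≃ₗ[ℤ] ℤ × ℤ)), IsSignedPerm w := by
  intro w hw
  induction hw using Subgroup.closure_induction with
  | mem x hx =>
    rcases hx with hx | hx <;> subst hx
    · exact ⟨1, 1, Or.inl rfl, Or.inl rfl, Or.inr fun v => by
        simp only [one_mul]; rfl⟩
    · exact ⟨1, -1, Or.inl rfl, Or.inr rfl, Or.inl fun v => by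
        simp only [one_mul, neg_one_mul]; rfl⟩
  | one => exact ⟨1, 1, Or.inl rfl, Or.inl rfl, Or.inl fun v => by simp⟩
  | mul x y hx hy ihx ihy =>
    obtain ⟨s, t, hs, ht, hf⟩ := ihx
    obtain ⟨s', t', hs', ht', hf'⟩ := ihy
    have hmul : ∀ v : ℤ × ℤ, (x * y) v = x (y v) := fun v => rfl
    rcases hf with hf | hf <;> rcases hf' with hf' | hf'
    · exact ⟨s * s', t * t', by rcases hs with rfl | rfl <;> rcases hs' with rfl | rfl <;> simp,
        by rcases ht with rfl | rfl <;> rcases ht' with rfl | rfl <;> simp,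
        Or.inl fun v => by rw [hmul, hf', hf]; simp [Prod.ext_iff]; constructor <;> ring⟩
    · exact ⟨s * s', t * t', by rcases hs with rfl | rfl <;> rcases hs' with rfl | rfl <;> simp,
        by rcases ht with rfl | rfl <;> rcases ht' with rfl | rfl <;> simp,
        Or.inr fun v => by rw [hmul, hf', hf]; simp [Prod.ext_iff]; constructor <;> ring⟩
    · exact ⟨s * t', t * s', by rcases hs with rfl | rfl <;> rcases ht' with rfl | rfl <;> simp,
        by rcases ht with rfl | rfl <;> rcases hs' with rfl | rfl <;> simp,
        Or.inr fun v => by rw [hmul, hf', hf]; simp [Prod.ext_iff]; constructor <;> ring⟩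
    · exact ⟨s * t', t * s', by rcases hs with rfl | rfl <;> rcases ht' with rfl | rfl <;> simp,
        by rcases ht with rfl | rfl <;> rcases hs' with rfl | rfl <;> simp,
        Or.inl fun v => by rw [hmul, hf', hf]; simp [Prod.ext_iff]; constructor <;> ring⟩
  | inv x hx ihx =>
    obtain ⟨s, t, hs, ht, hf⟩ := ihx
    have hss : s * s = 1 := by rcases hs with rfl | rfl <;> norm_num
    have htt : t * t = 1 := by rcases ht with rfl | rfl <;> norm_num
    have hinv : ∀ v : ℤ × ℤ, x (x⁻¹ v) = v := fun v => by
      simp [show x⁻¹ = x.symm from rfl]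
    rcases hf with hf | hf
    · refine ⟨s, t, hs, ht, Or.inl fun v => x.injective ?_⟩
      rw [hinv, hf]
      simp [Prod.ext_iff]
      constructor
      · rw [← mul_assoc, hss, one_mul]
      · rw [← mul_assoc, htt, one_mul]
    · refine ⟨t, s, ht, hs, Or.inr fun v => x.injective ?_⟩
      rw [hinv, hf]
      simp [Prod.ext_iff]
      constructor
      · rw [← mul_assoc, hss, one_mul]
      · rw [← mul_assoc, htt, one_mul]

/-- core arithmetic lemma -/
lemma core_arith (p A B c d e m n : ℤ) (hB : 1 ≤ B) (hBA : B + 1 ≤ A) (hp : A + B + 1 ≤ p)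
    (hcA : -A ≤ c ∧ c ≤ A) (hdA : -A ≤ d ∧ d ≤ A)
    (hc4 : -B ≤ c ∨ (c = -A ∧ -B ≤ d))
    (hlast : 1 ≤ d → d + 1 ≤ c → c = A ∧ d = B)
    (he : c + d + A + B = 2 * e) (he0 : 0 ≤ e)
    (hne : ¬(c - 2 + p * m = A - 2 ∧ d - 1 + p * (2 * n - m) = B - 1))
    (hd1 : d - 1 + p * (2 * n - m) ≤ c - 2 + p * m)
    (hd2 : 0 ≤ d - 1 + p * (2 * n - m)) :
    (p - B - 2 ≤ c - 2 + p * m) ∧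
      (2 * p - A - B - 3 ≤ (c - 2 + p * m) + (d - 1 + p * (2 * n - m))) ∧
      2 ∣ ((c - 2 + p * m) + (d - 1 + p * (2 * n - m)) - (2 * p - A - B - 3)) := by
  have hp0 : 0 < p := by omega
  -- m ≥ 0
  have hm : 0 ≤ m := by
    by_contra h
    push_neg at h
    have : p * m ≤ p * (-1) := mul_le_mul_of_nonneg_left (by omega) (by omega)
    omega
  -- k ≥ 0
  have hk : 0 ≤ 2 * n - m := by
    by_contra h
    push_neg at h
    have : p * (2 * n - m) ≤ p * (-1) := mul_le_mul_of_nonneg_left (by omega) (by omega)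
    omega
  -- n ≥ 1 (otherwise m = n = 0 and χ = λ0)
  have hn1 : 1 ≤ n := by
    by_contra h
    push_neg at h
    -- n ≤ 0, so 2n - m ≤ 0, with hk: 2n - m = 0, m = 2n ≥ 0 and m ≥ 0 forces n ≥ 0 so n = 0, m = 0
    have hm0 : m = 0 ∧ n = 0 := by omega
    obtain ⟨rfl, rfl⟩ := hm0
    simp at hd1 hd2 hne
    have := hlast (by omega) (by omega)
    omega
  constructor
  · -- p - B - 2 ≤ c - 2 + p * m,  i.e.  0 ≤ c + B + p*(m-1)
    rcases (show m = 0 ∨ m = 1 ∨ 2 ≤ m by omega) with rfl | rfl | h2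
    · -- m = 0, n ≥ 1: contradiction with dominance
      exfalso
      have : p * 2 ≤ p * (2 * n - 0) := mul_le_mul_of_nonneg_left (by omega) (by omega)
      omega
    · -- m = 1
      rcases hc4 with h | ⟨rfl, hd⟩
      · omega
      · -- c = -A: contradiction, since 2n-1 ≥ 1 makes χ2 > χ1
        exfalso
        have : p * 1 ≤ p * (2 * n - 1) := mul_le_mul_of_nonneg_left (by omega) (by omega)
        omega
    · have : p * 2 ≤ p * m := mul_le_mul_of_nonneg_left (by omega) (by omega)
      omega
  · have hpn : 0 ≤ p * (n - 1) := mul_nonneg (by omega) (by omega)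
    have hsplit : p * (2 * n - m) = 2 * (p * (n - 1)) + 2 * p - p * m := by ring
    constructor
    · omega
    · exact ⟨e + p * (n - 1), by omega⟩

/-- For `λ0 = (a,b)` in the lowest alcove `C₀` and `λ1 = (p-b-3, p-a-3)` its
reflection into `C₁`: every weight `χ = w·λ0 + pγ` (with `w` in the Weyl group
of `C₂` acting by the dot action and `γ` in the root lattice) which is dominant
and different from `λ0` satisfies `λ1 ≤ χ` in the root order. -/
theorem gsp4_dominant_orbit_above_lambda1 (p a b : ℤ) (hb : 0 ≤ b) (hba : b ≤ a)
    (hp : a + b + 3 < p) (lam0 lam1 : ℤ × ℤ)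
    (h0 : lam0 = (a, b)) (h1 : lam1 = (p - b - 3, p - a - 3)) :
    ∀ w ∈ Subgroup.closure ({sAlpha, sBeta} : Set ((ℤ × ℤ) ≃ₗ[ℤ] ℤ × ℤ)),
      ∀ m n : ℤ, ∀ χ : ℤ × ℤ,
        χ = w (lam0 + rhoR) - rhoR + p • (m • alphaR + n • betaR) →
        χ ≠ lam0 → 0 ≤ χ.1 - χ.2 → 0 ≤ χ.2 → rootLE lam1 χ := by
  intro w hw m n χ hχ hne hdom1 hdom2
  obtain ⟨s, t, hs, ht, hf⟩ := closure_isSignedPerm w hw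
  subst h0 h1
  set A := a + 2 with hA
  set B := b + 1 with hB
  have hsum : (a, b) + rhoR = ((A : ℤ), (B : ℤ)) := by simp [rhoR, Prod.ext_iff, hA, hB]
  -- compute χ coordinates
  have coords : ∀ x y : ℤ, ((x, y) - rhoR + p • (m • alphaR + n • betaR) : ℤ × ℤ)
      = (x - 2 + p * m, y - 1 + p * (2 * n - m)) := by
    intro x y
    simp only [alphaR, betaR, rhoR, Prod.smul_def, smul_eq_mul, Prod.mk_add_mk, Prod.mk_sub_mk,
      Prod.mk.injEq]
    constructor <;> ring
  have hcoord : ∃ U V : ℤ, ((U = A ∧ V = B) ∨ (U = B ∧ V = A)) ∧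
      χ.1 = s * U - 2 + p * m ∧ χ.2 = t * V - 1 + p * (2 * n - m) := by
    rcases hf with hf | hf
    · exact ⟨A, B, Or.inl ⟨rfl, rfl⟩, by rw [hχ, hsum, hf, coords], by rw [hχ, hsum, hf, coords]⟩
    · exact ⟨B, A, Or.inr ⟨rfl, rfl⟩, by rw [hχ, hsum, hf, coords], by rw [hχ, hsum, hf, coords]⟩
  obtain ⟨U, V, hUV, hχ1, hχ2⟩ := hcoord
  set c := s * U with hc
  set d := t * V with hd
  -- hypotheses for the core lemma
  have hB1 : 1 ≤ B := by omega
  have hBA : B + 1 ≤ A := by omega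
  have hpAB : A + B + 1 ≤ p := by omega
  have hcA : -A ≤ c ∧ c ≤ A := by
    rcases hs with rfl | rfl <;> rcases hUV with ⟨rfl, rfl⟩ | ⟨rfl, rfl⟩ <;>
      constructor <;> simp [hc] <;> omega
  have hdA : -A ≤ d ∧ d ≤ A := by
    rcases ht with rfl | rfl <;> rcases hUV with ⟨rfl, rfl⟩ | ⟨rfl, rfl⟩ <;>
      constructor <;> simp [hd] <;> omega
  have hc4 : -B ≤ c ∨ (c = -A ∧ -B ≤ d) := by
    rcases hs with rfl | rfl <;> rcases ht with rfl | rfl <;>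
      rcases hUV with ⟨rfl, rfl⟩ | ⟨rfl, rfl⟩ <;> simp [hc, hd] <;> omega
  have hlast : 1 ≤ d → d + 1 ≤ c → c = A ∧ d = B := by
    rcases hs with rfl | rfl <;> rcases ht with rfl | rfl <;>
      rcases hUV with ⟨rfl, rfl⟩ | ⟨rfl, rfl⟩ <;> simp [hc, hd] <;> omega
  have hpar : ∃ e : ℤ, c + d + A + B = 2 * e ∧ 0 ≤ e := by
    refine ⟨(c + d + A + B) / 2, ?_, ?_⟩ <;>
      rcases hs with rfl | rfl <;> rcases ht with rfl | rfl <;>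
      rcases hUV with ⟨rfl, rfl⟩ | ⟨rfl, rfl⟩ <;> simp [hc, hd] <;> omega
  obtain ⟨e, he, he0⟩ := hpar
  have hnec : ¬(c - 2 + p * m = A - 2 ∧ d - 1 + p * (2 * n - m) = B - 1) := by
    intro h
    exact hne (by rw [Prod.ext_iff]; constructor <;> omega)
  have hd1' : d - 1 + p * (2 * n - m) ≤ c - 2 + p * m := by omega
  have hd2' : 0 ≤ d - 1 + p * (2 * n - m) := by omega
  obtain ⟨k1, k2, k3⟩ := core_arith p A B c d e m n hB1 hBA hpAB hcA hdA hc4 hlast he he0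
    hnec hd1' hd2'
  -- build the rootLE witnesses
  refine ⟨χ.1 - (p - b - 3), (χ.1 + χ.2 - (2 * p - a - b - 6)) / 2, ?_, ?_, ?_⟩
  · omega
  · omega
  · rw [Prod.ext_iff]
    simp only [alphaR, betaR, Prod.smul_def, smul_eq_mul, Prod.mk_add_mk, Prod.mk_sub_mk,
      Prod.fst_sub, Prod.snd_sub]
    omega
end

section
/- Let p be an integer and λ0 = (a,b,c) ∈ ℤ³ with a ≥ b ≥ c and a−c+2 < p, and let λ1 = (p+c-2, b, a-p+2). Let W_aff·λ0 = { σ·λ0 + pγ : σ ∈ S₃, γ ∈ ℤ³ with γ1+γ2+γ3 = 0 } be the dot orbit of λ0 (where S₃ permutes coordinates and acts by σ·λ = σ(λ+ρ) − ρ). If χ ∈ W_aff·λ0 is dominant (χ1 ≥ χ2 ≥ χ3) and χ ≤ λ1 in the root order, then χ = λ0 or χ = λ1. -/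
/-- The simple root `α1 = (1,-1,0)` of `GL₃`. -/
def alpha1 : Fin 3 → ℤ := ![1, -1, 0]
/-- The simple root `α2 = (0,1,-1)` of `GL₃`. -/
def alpha2 : Fin 3 → ℤ := ![0, 1, -1]
/-- The half sum of positive roots `ρ = (2,1,0)` of `GL₃`. -/
def rho3 : Fin 3 → ℤ := ![2, 1, 0]

/-- Auxiliary: if `p*g` lies in `[-p, p]` with `p > 0` then `g ∈ {-1,0,1}`. -/
lemma gl3_aux_small (p g : ℤ) (hp : 0 < p) (h1 : -p ≤ p * g) (h2 : p * g ≤ p) :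
    g = -1 ∨ g = 0 ∨ g = 1 := by
  rcases le_or_gt g (-2) with h | h
  · exfalso
    have := mul_le_mul_of_nonneg_left h hp.le
    linarith
  rcases le_or_gt 2 g with h' | h'
  · exfalso
    have := mul_le_mul_of_nonneg_left h' hp.le
    linarith
  omega

/-- Auxiliary: the core linear-arithmetic step. -/
lemma gl3_key (p a b c X Y Z P0 P1 P2 x0 x1 x2 m n : ℤ)
    (hab : b ≤ a) (hbc : c ≤ b) (hp : a - c + 2 < p)
    (hX : X = a + 2 ∨ X = b + 1 ∨ X = c)
    (hY : Y = a + 2 ∨ Y = b + 1 ∨ Y = c)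
    (hZ : Z = a + 2 ∨ Z = b + 1 ∨ Z = c)
    (hsum : X + Y + Z = (a + 2) + (b + 1) + c)
    (e0 : x0 = X - 2 + P0) (e1 : x1 = Y - 1 + P1) (e2 : x2 = Z - 0 + P2)
    (hd1 : x1 ≤ x0) (hd2 : x2 ≤ x1)
    (hm : 0 ≤ m) (hn : 0 ≤ n)
    (f0 : p + c - 2 - x0 = m) (f1 : b - x1 = -m + n) (f2 : a - p + 2 - x2 = -n)
    (hPsum : P0 + P1 + P2 = 0)
    (hg0 : P0 = 0 ∨ P0 = p) (hg1 : P1 = 0) (hg2 : P2 = 0 ∨ P2 = -p) :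
    (x0 = a ∧ x1 = b ∧ x2 = c) ∨
      (x0 = p + c - 2 ∧ x1 = b ∧ x2 = a - p + 2) := by
  omega

set_option maxHeartbeats 1600000 in
/-- For `λ0 = (a,b,c)` in the lowest alcove `C₀` of `GL₃` and
`λ1 = (p+c-2, b, a-p+2)` its reflection into the upper restricted alcove: if
`χ = σ·λ0 + pγ` (with `σ ∈ S₃` acting by the dot action `σ·λ = σ(λ+ρ)−ρ` and
`γ` a sum-zero integer vector) is dominant and `χ ≤ λ1` in the root order, then
`χ = λ0` or `χ = λ1`. -/
theorem gl3_dominant_below_lambda1 (p a b c : ℤ) (hab : b ≤ a) (hbc : c ≤ b)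
    (hp : a - c + 2 < p) (lam0 lam1 : Fin 3 → ℤ)
    (h0 : lam0 = ![a, b, c]) (h1 : lam1 = ![p + c - 2, b, a - p + 2]) :
    ∀ σ : Equiv.Perm (Fin 3), ∀ γ : Fin 3 → ℤ, γ 0 + γ 1 + γ 2 = 0 →
      ∀ χ : Fin 3 → ℤ,
        χ = (fun i => (lam0 + rho3) (σ i) - rho3 i) + p • γ →
        χ 1 ≤ χ 0 → χ 2 ≤ χ 1 →
        (∃ m n : ℤ, 0 ≤ m ∧ 0 ≤ n ∧ lam1 - χ = m • alpha1 + n • alpha2) →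
        χ = lam0 ∨ χ = lam1 := by
  intro σ γ hγ χ hχ hd1 hd2 ⟨m, n, hm, hn, heq⟩
  subst h0 h1
  -- component values of lam0 + rho3
  have hv : ∀ j : Fin 3, (![a, b, c] + rho3) j = a + 2 ∨
      (![a, b, c] + rho3) j = b + 1 ∨ (![a, b, c] + rho3) j = c := by
    intro j
    fin_cases j <;> simp [rho3]
  have hX := hv (σ 0)
  have hY := hv (σ 1)
  have hZ := hv (σ 2)
  set X := (![a, b, c] + rho3) (σ 0) with hXd
  set Y := (![a, b, c] + rho3) (σ 1) with hYd
  set Z := (![a, b, c] + rho3) (σ 2) with hZd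
  -- sum over the permutation
  have hsum : X + Y + Z = (a + 2) + (b + 1) + c := by
    have := Equiv.sum_comp σ (![a, b, c] + rho3)
    rw [Fin.sum_univ_three, Fin.sum_univ_three] at this
    rw [hXd, hYd, hZd, this]
    simp [rho3]
  -- component equations for χ
  have e0 : χ 0 = X - 2 + p * γ 0 := by
    rw [hχ]; show X - rho3 0 + p * γ 0 = _; simp [rho3]
  have e1 : χ 1 = Y - 1 + p * γ 1 := by
    rw [hχ]; show Y - rho3 1 + p * γ 1 = _; simp [rho3]
  have e2 : χ 2 = Z - 0 + p * γ 2 := by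
    rw [hχ]; show Z - rho3 2 + p * γ 2 = _; simp [rho3]
  -- component equations for lam1 - χ
  have f0 := congrFun heq 0
  have f1 := congrFun heq 1
  have f2 := congrFun heq 2
  simp only [Pi.sub_apply, Pi.add_apply, Pi.smul_apply, smul_eq_mul,
    alpha1, alpha2] at f0 f1 f2
  norm_num at f0 f1 f2
  -- abbreviate the p-multiples
  set P0 := p * γ 0 with hP0d
  set P1 := p * γ 1 with hP1d
  set P2 := p * γ 2 with hP2d
  have hPsum : P0 + P1 + P2 = 0 := by
    rw [hP0d, hP1d, hP2d]; linear_combination p * hγ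
  have hpos : 0 < p := by omega
  -- bounds on χ: χ 0 ≤ p + c - 2, χ 2 ≥ a - p + 2
  have hχ0 : χ 0 ≤ p + c - 2 := by omega
  have hχ2 : a - p + 2 ≤ χ 2 := by omega
  -- bound each P_i
  have hb0 : 2 - p ≤ P0 ∧ P0 ≤ p := by
    constructor
    · have : a - p + 2 ≤ χ 0 := by omega
      omega
    · omega
  have hb1 : 1 - p ≤ P1 ∧ P1 ≤ p - 1 := by
    constructor
    · have : a - p + 2 ≤ χ 1 := by omega
      omega
    · have : χ 1 ≤ p + c - 2 := by omega
      omega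
  have hb2 : -p ≤ P2 ∧ P2 ≤ p - 2 := by
    constructor
    · omega
    · have : χ 2 ≤ p + c - 2 := by omega
      omega
  -- deduce the possible values of γ and hence of the P_i
  have hg0 : P0 = 0 ∨ P0 = p := by
    have h := gl3_aux_small p (γ 0) hpos (by rw [← hP0d]; omega) (by rw [← hP0d]; omega)
    rcases h with h | h | h
    · exfalso
      have hh : P0 = -p := by rw [hP0d, h]; ring
      omega
    · left; rw [hP0d, h, mul_zero]
    · right; rw [hP0d, h, mul_one]
  have hg1 : P1 = 0 := by
    have h := gl3_aux_small p (γ 1) hpos (by rw [← hP1d]; omega) (by rw [← hP1d]; omega)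
    rcases h with h | h | h
    · exfalso
      have hh : P1 = -p := by rw [hP1d, h]; ring
      omega
    · rw [hP1d, h, mul_zero]
    · exfalso
      have hh : P1 = p := by rw [hP1d, h, mul_one]
      omega
  have hg2 : P2 = 0 ∨ P2 = -p := by
    have h := gl3_aux_small p (γ 2) hpos (by rw [← hP2d]; omega) (by rw [← hP2d]; omega)
    rcases h with h | h | h
    · right; rw [hP2d, h]; ring
    · left; rw [hP2d, h, mul_zero]
    · exfalso
      have hh : P2 = p := by rw [hP2d, h, mul_one]
      omega
  -- now everything is linear arithmetic
  have key := gl3_key p a b c X Y Z P0 P1 P2 (χ 0) (χ 1) (χ 2) m n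
    hab hbc hp hX hY hZ hsum e0 e1 e2 hd1 hd2 hm hn f0 f1
      (by have h : a - p + 2 - χ 2 = m * 0 + n * (-1) := f2; linarith) hPsum hg0 hg1 hg2
  rcases key with ⟨k0, k1, k2⟩ | ⟨k0, k1, k2⟩
  · left
    funext i
    fin_cases i <;> assumption
  · right
    funext i
    fin_cases i <;> assumption
end

section
/- Let p be an integer and λ0 = (a,b) with 0 ≤ b ≤ a and a+b+3 < p, and set λ1 = (p-b-3, p-a-3), λ2 = (p+b-1, p-a-3), λ'1 = (p-a-4, p-b-2), λ'2 = (p-a-4, p+b), μ2 = (p+b-1, a-p+1). Let W be the group of linear automorphisms of ℤ² generated by s_α(x,y) = (y,x) and s_β(x,y) = (x,-y), acting by the dot action w·λ = w(λ+ρ) − ρ. Then for every w ∈ W and every i ∈ {0,1,2}: if λ0 ≤ w·λi in the root order, then w·λi ∈ {λ0, λ1, λ2, λ'1, λ'2, μ2}. -/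
def Good (w : (ℤ × ℤ) ≃ₗ[ℤ] ℤ × ℤ) : Prop :=
  ∃ s1 s2 : ℤ, ∃ t : Bool, (s1 = 1 ∨ s1 = -1) ∧ (s2 = 1 ∨ s2 = -1) ∧
    ∀ v : ℤ × ℤ, w v = (s1 * (if t then v.2 else v.1), s2 * (if t then v.1 else v.2))

lemma good_closure (w : (ℤ × ℤ) ≃ₗ[ℤ] ℤ × ℤ)
    (hw : w ∈ Subgroup.closure ({sAlpha, sBeta} : Set ((ℤ × ℤ) ≃ₗ[ℤ] ℤ × ℤ))) : Good w := by
  induction hw using Subgroup.closure_induction with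
  | mem x hx =>
    rcases hx with hx | hx
    · subst hx
      exact ⟨1, 1, true, Or.inl rfl, Or.inl rfl, fun v => by simp [sAlpha, Prod.swap]⟩
    · subst hx
      exact ⟨1, -1, false, Or.inl rfl, Or.inr rfl, fun v => by simp [sBeta]⟩
  | one => exact ⟨1, 1, false, Or.inl rfl, Or.inl rfl, fun v => by simp⟩
  | mul x y hx hy ihx ihy =>
    obtain ⟨s1, s2, t, hs1, hs2, hxv⟩ := ihx
    obtain ⟨r1, r2, u, hr1, hr2, hyv⟩ := ihy
    refine ⟨s1 * (if t then r2 else r1), s2 * (if t then r1 else r2), xor t u, ?_, ?_, ?_⟩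
    · rcases hs1 with rfl | rfl <;> cases t <;> rcases hr1 with rfl | rfl <;>
        rcases hr2 with rfl | rfl <;> simp
    · rcases hs2 with rfl | rfl <;> cases t <;> rcases hr1 with rfl | rfl <;>
        rcases hr2 with rfl | rfl <;> simp
    · intro v
      have : (x * y) v = x (y v) := rfl
      rw [this, hyv, hxv]
      cases t <;> cases u <;> simp [Prod.ext_iff, mul_assoc]
  | inv x hx ihx =>
    obtain ⟨s1, s2, t, hs1, hs2, hxv⟩ := ihx
    refine ⟨if t then s2 else s1, if t then s1 else s2, t, ?_, ?_, ?_⟩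
    · cases t <;> simp [hs1, hs2]
    · cases t <;> simp [hs1, hs2]
    · intro v
      apply x.injective
      have hinv : x (x⁻¹ v) = v := by
        show x (x.symm v) = v
        exact x.apply_symm_apply v
      rw [hinv, hxv]
      rcases hs1 with rfl | rfl <;> rcases hs2 with rfl | rfl <;> cases t <;> simp


/-- For `λ0 = (a,b)` in the lowest alcove `C₀` of `GSp₄`, and for every `w` in
the Weyl group of `C₂` (acting by the dot action `w·λ = w(λ+ρ)−ρ`) and every
`i ∈ {0,1,2}`: if `λ0 ≤ w·λi` in the root order then
`w·λi ∈ {λ0, λ1, λ2, λ'1, λ'2, μ2}`. -/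
theorem gsp4_weyl_translates_above_lambda0 (p a b : ℤ) (hb : 0 ≤ b) (hba : b ≤ a)
    (hp : a + b + 3 < p) (lam0 lam1 lam2 lam1' lam2' mu2 : ℤ × ℤ)
    (h0 : lam0 = (a, b)) (h1 : lam1 = (p - b - 3, p - a - 3))
    (h2 : lam2 = (p + b - 1, p - a - 3)) (h1' : lam1' = (p - a - 4, p - b - 2))
    (h2' : lam2' = (p - a - 4, p + b)) (hmu : mu2 = (p + b - 1, a - p + 1)) :
    ∀ w ∈ Subgroup.closure ({sAlpha, sBeta} : Set ((ℤ × ℤ) ≃ₗ[ℤ] ℤ × ℤ)),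
      ∀ lam ∈ ({lam0, lam1, lam2} : Set (ℤ × ℤ)),
        rootLE lam0 (w (lam + rhoR) - rhoR) →
        w (lam + rhoR) - rhoR ∈ ({lam0, lam1, lam2, lam1', lam2', mu2} : Set (ℤ × ℤ)) := by
  intro w hw lam hlam hle
  obtain ⟨s1, s2, t, hs1, hs2, hwv⟩ := good_closure w hw
  obtain ⟨m, n, hm, hn, heq⟩ := hle
  rw [hwv] at heq ⊢
  subst h0 h1 h2 h1' h2' hmu
  rcases hlam with rfl | rfl | rfl <;> rcases hs1 with rfl | rfl <;>
    rcases hs2 with rfl | rfl <;> cases t <;>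
    simp only [alphaR, betaR, rhoR, Prod.mk_add_mk, Prod.mk_sub_mk, Prod.smul_mk,
      smul_eq_mul, Set.mem_insert_iff, Set.mem_singleton_iff, Prod.mk.injEq,
      if_true, if_false, Bool.false_eq_true] at heq ⊢ <;> omega
end
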